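/- Let T be a pruned lexicographically ordered ω₁-tree such that for every α < ω₁ the level T(α) has a <lex-greatest element m_α. Then for all α < β < ω₁ one has m_α < m_β in the tree order, the downward closure B of {m_α : α < ω₁} is a cofinal branch of T with B(α) = m_α for all α, B is the <lex-greatest element of 𝓑(T), and B is a local right end point of T. -/

import Mathlib

noncomputable section

open Cardinal Set

def omega1 : Ordinal := (Cardinal.aleph 1).ord

def omega2 : Ordinal := (Cardinal.aleph 2).ord

/-- The height of an element `t`: the order type of its set of strict predecessors. -/
def htOf {X : Type} (lt : X → X → Prop)
    (wo : ∀ t : X, IsWellOrder {s : X // lt s t} fun a b => lt a.1 b.1) (t : X) : Ordinal :=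
  @Ordinal.type {s : X // lt s t} (fun a b => lt a.1 b.1) (wo t)

/-- A lexicographically ordered (normal) `ω₁`-tree. -/
structure LexOmega1Tree where
  T : Type
  lt : T → T → Prop
  lt_irrefl : ∀ a : T, ¬ lt a a
  lt_trans : ∀ {a b c : T}, lt a b → lt b c → lt a c
  /-- the strict predecessors of any element are well-ordered -/
  predWO : ∀ t : T, IsWellOrder {s : T // lt s t} fun a b => lt a.1 b.1
  /-- every level is countable -/
  level_countable : ∀ α : Ordinal, {t : T | htOf lt predWO t = α}.Countable
  /-- levels are nonempty exactly below `ω₁` -/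
  level_nonempty : ∀ α : Ordinal, (∃ t : T, htOf lt predWO t = α) ↔ α < omega1
  /-- normality: distinct elements of the same limit height have different predecessors -/
  normal : ∀ s t : T, htOf lt predWO s = htOf lt predWO t →
    Order.IsSuccLimit (htOf lt predWO s) → (∀ u : T, lt u s ↔ lt u t) → s = t
  /-- the lexicographic comparison of distinct elements of equal height -/
  lexlt : T → T → Prop
  lexlt_same : ∀ a b : T, lexlt a b → htOf lt predWO a = htOf lt predWO b ∧ a ≠ b
  lexlt_tricho : ∀ a b : T, htOf lt predWO a = htOf lt predWO b → a ≠ b →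
    lexlt a b ∨ lexlt b a
  lexlt_asymm : ∀ a b : T, lexlt a b → ¬ lexlt b a
  lexlt_trans : ∀ {a b c : T}, lexlt a b → lexlt b c → lexlt a c
  /-- coherence: the lexicographic comparison is decided at the splitting level -/
  lexlt_coh : ∀ a b a' b' : T, lexlt a b → lt a a' → lt b b' →
    htOf lt predWO a' = htOf lt predWO b' → lexlt a' b'

namespace LexOmega1Tree

variable (S : LexOmega1Tree)

def ht : S.T → Ordinal := htOf S.lt S.predWO

def le (a b : S.T) : Prop := S.lt a b ∨ a = b

/-- a cofinal branch : a downward closed chain meeting every level -/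
def IsBranch (b : Set S.T) : Prop :=
  (∀ s t : S.T, t ∈ b → S.lt s t → s ∈ b) ∧
  (∀ s t : S.T, s ∈ b → t ∈ b → s = t ∨ S.lt s t ∨ S.lt t s) ∧
  (∀ α : Ordinal, α < omega1 → ∃ t ∈ b, S.ht t = α)

/-- the set `𝓑(T)` of cofinal branches -/
def Branch : Type := {b : Set S.T // S.IsBranch b}

/-- the lexicographic order on branches (and on arbitrary sets of nodes) -/
def blex (A B : Set S.T) : Prop := ∃ a ∈ A, ∃ b ∈ B, S.lexlt a b

/-- the order topology on `(𝓑(T), <lex)`, generated by the open rays -/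
def branchTop : TopologicalSpace S.Branch :=
  TopologicalSpace.generateFrom
    {s : Set S.Branch | ∃ a : S.Branch, s = {x | S.blex a.1 x.1} ∨ s = {x | S.blex x.1 a.1}}

/-- `b` is a local right end point of the downward closed subtree `W` -/
def IsLocalRightEP (W b : Set S.T) : Prop :=
  ∃ t ∈ b, ∀ s ∈ b, S.ht t ≤ S.ht s →
    ∀ u ∈ W, S.ht u = S.ht s → S.le t u → u = s ∨ S.lexlt u s

/-- `b` is a local left end point of the downward closed subtree `W` -/
def IsLocalLeftEP (W b : Set S.T) : Prop :=
  ∃ t ∈ b, ∀ s ∈ b, S.ht t ≤ S.ht s →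
    ∀ u ∈ W, S.ht u = S.ht s → S.le t u → u = s ∨ S.lexlt s u

def IsLocalEP (W b : Set S.T) : Prop := S.IsLocalRightEP W b ∨ S.IsLocalLeftEP W b

end LexOmega1Tree

/-!
The maxima `m α` are forced to form a chain: if the predecessor `s` of `m β` at level `α` were
not `m α`, then `s <lex m α`, and by coherence any extension of `m α` to level `β` (which exists
since `T` is pruned) would lie lexicographically above `m β`. The downward closure `B` of an
`ω₁`-chain meeting every level is a cofinal branch whose `α`-th element is `m α`. Any other
branch leaves `B` at some node `t ≠ m (ht t)`, where `t <lex m (ht t)`; and `B` is a local right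
end point already from its root `m 0`, since every `B(α)` is the greatest element of its level.
-/

namespace LexOmega1Tree

variable (S : LexOmega1Tree)

def IsPruned : Prop :=
  ∀ t : S.T, ∀ α : Ordinal, S.ht t ≤ α → α < omega1 → ∃ s : S.T, S.le t s ∧ S.ht s = α

def downClosure (m : Ordinal → S.T) : Set S.T :=
  {t : S.T | ∃ α : Ordinal, α < omega1 ∧ S.le t (m α)}

lemma ht_eq_typein {s t : S.T} (h : S.lt s t) :
    S.ht s = @Ordinal.typein {u : S.T // S.lt u t} (fun a b => S.lt a.1 b.1) (S.predWO t)
      ⟨s, h⟩ := by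
  let _ := S.predWO t
  let _ := S.predWO s
  rw [← Ordinal.type_subrel]
  exact Ordinal.type_eq.2 ⟨⟨⟨fun u => ⟨⟨u.1, S.lt_trans u.2 h⟩, u.2⟩,
    fun y => ⟨y.1.1, y.2⟩, fun _ => rfl, fun _ => rfl⟩, Iff.rfl⟩⟩

lemma ht_lt_ht_of_lt {s t : S.T} (h : S.lt s t) : S.ht s < S.ht t := by
  let _ := S.predWO t
  rw [S.ht_eq_typein h]
  exact Ordinal.typein_lt_type _ _

lemma exists_lt_ht_eq {t : S.T} {α : Ordinal} (h : α < S.ht t) :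
    ∃ s, S.lt s t ∧ S.ht s = α := by
  let _ := S.predWO t
  obtain ⟨a, ha⟩ := Ordinal.typein_surj (fun a b : {u : S.T // S.lt u t} => S.lt a.1 b.1) h
  exact ⟨a.1, a.2, by rw [S.ht_eq_typein a.2, ha]⟩

lemma ht_lt_omega1 (t : S.T) : S.ht t < omega1 := (S.level_nonempty (S.ht t)).1 ⟨t, rfl⟩

lemma trichotomous_of_lt_of_lt {s s' t : S.T} (h : S.lt s t) (h' : S.lt s' t) :
    s = s' ∨ S.lt s s' ∨ S.lt s' s := by
  let _ := S.predWO t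
  rcases trichotomous_of (fun a b : {u : S.T // S.lt u t} => S.lt a.1 b.1) ⟨s, h⟩ ⟨s', h'⟩ with
    hlt | heq | hgt
  · exact Or.inr (Or.inl hlt)
  · exact Or.inl (congrArg Subtype.val heq)
  · exact Or.inr (Or.inr hgt)

lemma trichotomous_of_le_of_le {s s' t : S.T} (h : S.le s t) (h' : S.le s' t) :
    s = s' ∨ S.lt s s' ∨ S.lt s' s := by
  rcases h with h | rfl <;> rcases h' with h' | rfl
  · exact S.trichotomous_of_lt_of_lt h h'
  · exact Or.inr (Or.inl h)
  · exact Or.inr (Or.inr h')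
  · exact Or.inl rfl

lemma eq_of_lt_of_lt_of_ht_eq {s s' t : S.T} (h : S.lt s t) (h' : S.lt s' t)
    (he : S.ht s = S.ht s') : s = s' := by
  rcases S.trichotomous_of_lt_of_lt h h' with hs | hs | hs
  · exact hs
  · exact absurd he (S.ht_lt_ht_of_lt hs).ne
  · exact absurd he.symm (S.ht_lt_ht_of_lt hs).ne

lemma lt_of_le_of_ht_ne {s t : S.T} (h : S.le s t) (hne : S.ht s ≠ S.ht t) : S.lt s t :=
  h.resolve_right fun hst => hne (congrArg S.ht hst)

lemma lt_of_le_of_lt {s t u : S.T} (hst : S.le s t) (htu : S.lt t u) : S.lt s u :=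
  hst.elim (fun h => S.lt_trans h htu) fun h => h ▸ htu

lemma lt_of_lt_of_le {s t u : S.T} (hst : S.lt s t) (htu : S.le t u) : S.lt s u :=
  htu.elim (fun h => S.lt_trans hst h) fun h => h ▸ hst

lemma omega1_pos : (0 : Ordinal) < omega1 := by
  rw [omega1, Cardinal.lt_ord]
  simp

lemma IsPruned.exists_lexlt_of_lexlt {S : LexOmega1Tree} (hP : S.IsPruned) {s a s₂ : S.T}
    (hsa : S.lexlt s a) (hss₂ : S.lt s s₂) :
    ∃ a₂, S.ht a₂ = S.ht s₂ ∧ S.lexlt s₂ a₂ := by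
  have hht : S.ht a < S.ht s₂ := by
    rw [← show S.ht s = S.ht a from (S.lexlt_same s a hsa).1]
    exact S.ht_lt_ht_of_lt hss₂
  obtain ⟨a₂, haa₂, ha₂⟩ := hP a (S.ht s₂) hht.le (S.ht_lt_omega1 s₂)
  have haa₂ : S.lt a a₂ := S.lt_of_le_of_ht_ne haa₂ (ha₂ ▸ hht.ne)
  exact ⟨a₂, ha₂, S.lexlt_coh s a s₂ a₂ hsa hss₂ haa₂ ha₂.symm⟩

section Chain

variable {S} {m : Ordinal → S.T}

lemma lt_of_isPruned_of_lexGreatest (hP : S.IsPruned)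
    (hm_ht : ∀ α : Ordinal, α < omega1 → S.ht (m α) = α)
    (hm_max : ∀ α : Ordinal, α < omega1 → ∀ u : S.T, S.ht u = α →
      u = m α ∨ S.lexlt u (m α))
    {α β : Ordinal} (hαβ : α < β) (hβ : β < omega1) : S.lt (m α) (m β) := by
  have hα : α < omega1 := hαβ.trans hβ
  obtain ⟨s, hs, hsα⟩ := S.exists_lt_ht_eq ((hm_ht β hβ).symm ▸ hαβ)
  rcases hm_max α hα s hsα with rfl | hslex
  · exact hs
  obtain ⟨a, ha, hlex⟩ := hP.exists_lexlt_of_lexlt hslex hs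
  rcases hm_max β hβ a (ha.trans (hm_ht β hβ)) with rfl | hlex'
  · exact absurd rfl (S.lexlt_same _ _ hlex).2
  · exact absurd hlex' (S.lexlt_asymm _ _ hlex)

lemma le_of_le_of_chain {t : S.T} {α β : Ordinal}
    (hchain : ∀ α β : Ordinal, α < β → β < omega1 → S.lt (m α) (m β))
    (hαβ : α ≤ β) (hβ : β < omega1) (ht : S.le t (m α)) : S.le t (m β) :=
  hαβ.eq_or_lt.elim (fun h => h ▸ ht) fun h => Or.inl (S.lt_of_le_of_lt ht (hchain α β h hβ))

lemma isBranch_downClosure (hm_ht : ∀ α : Ordinal, α < omega1 → S.ht (m α) = α)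
    (hchain : ∀ α β : Ordinal, α < β → β < omega1 → S.lt (m α) (m β)) :
    S.IsBranch (S.downClosure m) := by
  refine ⟨?_, ?_, fun α hα => ⟨m α, ⟨α, hα, Or.inr rfl⟩, hm_ht α hα⟩⟩
  · rintro s t ⟨γ, hγ, htγ⟩ hst
    exact ⟨γ, hγ, Or.inl (S.lt_of_lt_of_le hst htγ)⟩
  · rintro s t ⟨γ, hγ, hsγ⟩ ⟨δ, hδ, htδ⟩
    rcases le_total γ δ with h | h
    · exact S.trichotomous_of_le_of_le (le_of_le_of_chain hchain h hδ hsγ) htδ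
    · exact S.trichotomous_of_le_of_le hsγ (le_of_le_of_chain hchain h hγ htδ)

lemma eq_of_mem_downClosure (hm_ht : ∀ α : Ordinal, α < omega1 → S.ht (m α) = α)
    (hchain : ∀ α β : Ordinal, α < β → β < omega1 → S.lt (m α) (m β))
    {t : S.T} (ht : t ∈ S.downClosure m) : t = m (S.ht t) := by
  obtain ⟨γ, hγ, htγ | rfl⟩ := ht
  · have hlt : S.ht t < γ := hm_ht γ hγ ▸ S.ht_lt_ht_of_lt htγ
    exact S.eq_of_lt_of_lt_of_ht_eq htγ (hchain _ γ hlt hγ)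
      (hm_ht _ (hlt.trans hγ)).symm
  · rw [hm_ht γ hγ]

lemma eq_downClosure_of_forall_eq {b : Set S.T} (hb : S.IsBranch b)
    (hbm : ∀ t ∈ b, t = m (S.ht t)) : b = S.downClosure m := by
  obtain ⟨hdown, -, hlevels⟩ := hb
  ext t
  refine ⟨fun ht => ⟨S.ht t, S.ht_lt_omega1 t, Or.inr (hbm t ht)⟩, ?_⟩
  rintro ⟨γ, hγ, htγ⟩
  obtain ⟨u, hu, huγ⟩ := hlevels γ hγ
  have hum : u = m γ := huγ ▸ hbm u hu
  rcases htγ with htγ | rfl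
  · exact hdown t u hu (hum ▸ htγ)
  · exact hum ▸ hu

lemma blex_downClosure
    (hm_max : ∀ α : Ordinal, α < omega1 → ∀ u : S.T, S.ht u = α →
      u = m α ∨ S.lexlt u (m α))
    {b : Set S.T} (hb : S.IsBranch b) (hne : b ≠ S.downClosure m) :
    S.blex b (S.downClosure m) := by
  obtain ⟨t, ht, htm⟩ : ∃ t ∈ b, t ≠ m (S.ht t) := by
    by_contra! hbm
    exact hne (eq_downClosure_of_forall_eq hb hbm)
  have hα := S.ht_lt_omega1 t
  exact ⟨t, ht, m (S.ht t), ⟨S.ht t, hα, Or.inr rfl⟩,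
    (hm_max _ hα t rfl).resolve_left htm⟩

lemma isLocalRightEP_downClosure (hm_ht : ∀ α : Ordinal, α < omega1 → S.ht (m α) = α)
    (hm_max : ∀ α : Ordinal, α < omega1 → ∀ u : S.T, S.ht u = α →
      u = m α ∨ S.lexlt u (m α))
    (hchain : ∀ α β : Ordinal, α < β → β < omega1 → S.lt (m α) (m β)) :
    S.IsLocalRightEP Set.univ (S.downClosure m) := by
  refine ⟨m 0, ⟨0, omega1_pos, Or.inr rfl⟩, fun s hs _ u _ hus _ => ?_⟩
  rw [eq_of_mem_downClosure hm_ht hchain hs]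
  exact hm_max _ (S.ht_lt_omega1 s) u hus

end Chain

end LexOmega1Tree

/-- If `T` is a pruned lexicographically ordered `ω₁`-tree whose every level
`T(α)` (for `α < ω₁`) has a `<lex`-greatest element `m α`, then the `m α` form a chain in
the tree order, their downward closure `B` is a cofinal branch with `B(α) = m α`,
`B` is the `<lex`-greatest element of `𝓑(T)`, and `B` is a local right end point of `T`. -/
theorem stmt5 (S : LexOmega1Tree)
    (hpruned : ∀ t : S.T, ∀ α : Ordinal, S.ht t ≤ α → α < omega1 →
      ∃ s : S.T, S.le t s ∧ S.ht s = α)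
    (m : Ordinal → S.T)
    (hm_ht : ∀ α : Ordinal, α < omega1 → S.ht (m α) = α)
    (hm_max : ∀ α : Ordinal, α < omega1 → ∀ u : S.T, S.ht u = α →
      u = m α ∨ S.lexlt u (m α)) :
    (∀ α β : Ordinal, α < β → β < omega1 → S.lt (m α) (m β)) ∧
    S.IsBranch {t : S.T | ∃ α : Ordinal, α < omega1 ∧ S.le t (m α)} ∧
    (∀ α : Ordinal, α < omega1 →
      ∀ t ∈ {t : S.T | ∃ α' : Ordinal, α' < omega1 ∧ S.le t (m α')},
        S.ht t = α → t = m α) ∧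
    (∀ b : Set S.T, S.IsBranch b →
      b ≠ {t : S.T | ∃ α : Ordinal, α < omega1 ∧ S.le t (m α)} →
      S.blex b {t : S.T | ∃ α : Ordinal, α < omega1 ∧ S.le t (m α)}) ∧
    S.IsLocalRightEP Set.univ {t : S.T | ∃ α : Ordinal, α < omega1 ∧ S.le t (m α)} := by
  have hchain : ∀ α β : Ordinal, α < β → β < omega1 → S.lt (m α) (m β) :=
    fun _ _ hαβ hβ => S.lt_of_isPruned_of_lexGreatest hpruned hm_ht hm_max hαβ hβ
  refine ⟨hchain, S.isBranch_downClosure hm_ht hchain, ?_,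
    fun b hb hne => S.blex_downClosure hm_max hb hne,
    S.isLocalRightEP_downClosure hm_ht hm_max hchain⟩
  intro α _ t ht htα
  rw [S.eq_of_mem_downClosure hm_ht hchain ht, htα]
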